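/- Let G=(V,E) be a correlation clustering instance, β∈(0,1), 𝒞 any clustering, k∈[n], and U⊆V with |U|=k. Let f^+_3 = Σ_{u∈U} Σ_{uv∈φ^+_3(u)} x_{uv}. Then there exists a vector c^+_3∈ℝ_{≥0}^{V} such that: (a) f^+_3 ≤ Σ_{r∈V} c^+_3(r)·cost_𝒞(r); (b) c^+_3(r) ≤ 2·( |φ^+_2(r)|·|φ^+_3(r)|/(β·d(r)^2) + |φ^+_2(r)|/(β·d(r)) + |φ^+_3(r)|/d(r) ) for every r∈V; (c) Σ_{r∈V} c^+_3(r) ≤ 2·Σ_{u∈U} ( |φ^+_2(u)|·|φ^+_3(u)|/(β·d(u)^2) + |φ^+_3(u)|/(β·d(u)) + |φ^+_3(u)|/d(u) ). -/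

import Mathlib

open Finset

attribute [local instance] Classical.propDecidable

noncomputable section

variable {V : Type*}

/-- The neighborhood of `u` in the graph of `+`edges `E` (contains `u` itself,
since `E` contains all self-loops). -/
def Nbr [Fintype V] (E : V → V → Prop) (u : V) : Finset V :=
  Finset.univ.filter (fun v => E u v)

/-- The degree `d(u) = |N(u)|`. -/
def deg [Fintype V] (E : V → V → Prop) (u : V) : ℕ := (Nbr E u).card

/-- `M_{uv} = max (d(u), d(v))`. -/
def Mdeg [Fintype V] (E : V → V → Prop) (u v : V) : ℕ := max (deg E u) (deg E v)

/-- The pruned edge set `E_H = {uv ∈ E : |N(u) Δ N(v)| ≤ β · M_{uv}}`. -/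
def EH [Fintype V] (β : ℝ) (E : V → V → Prop) (u v : V) : Prop :=
  E u v ∧ ((symmDiff (Nbr E u) (Nbr E v)).card : ℝ) ≤ β * (Mdeg E u v : ℝ)

/-- The neighborhood of `u` in the pruned graph `H`. -/
def NH [Fintype V] (β : ℝ) (E : V → V → Prop) (u : V) : Finset V :=
  Finset.univ.filter (fun v => EH β E u v)

/-- The fractional solution: `x_{uu} = 0` and
`x_{uv} = 1 − |N_H(u) ∩ N_H(v)| / M_{uv}` for `u ≠ v`. -/
def xval [Fintype V] (β : ℝ) (E : V → V → Prop) (u v : V) : ℝ :=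
  if u = v then 0 else 1 - ((NH β E u ∩ NH β E v).card : ℝ) / (Mdeg E u v : ℝ)

/-- `cost_𝒞(u)`: the number of pairs incident to `u` in disagreement with respect
to the clustering `C` (given as a labelling function). -/
def costC [Fintype V] {α : Type*} (E : V → V → Prop) (C : V → α) (u : V) : ℕ :=
  (Finset.univ.filter
    (fun v => (E u v ∧ C u ≠ C v) ∨ (¬ E u v ∧ v ≠ u ∧ C u = C v))).card

/-- The top-`k` norm `cost^k_𝒞` of the disagreement vector of the clustering `C`:
the maximum of `∑_{u ∈ T} cost_𝒞(u)` over subsets `T ⊆ V` of size `k`. -/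
def costTopK [Fintype V] {α : Type*} (E : V → V → Prop) (C : V → α) (k : ℕ) : ℕ :=
  (Finset.powersetCard k (Finset.univ : Finset V)).sup (fun T => ∑ u ∈ T, costC E C u)

/-- `φ^+_1(u)`: (other endpoints of) `+`edges incident to `u` that are cut in `𝒞`. -/
def phi1p [Fintype V] {α : Type*} (E : V → V → Prop) (C : V → α) (u : V) : Finset V :=
  Finset.univ.filter (fun v => E u v ∧ C u ≠ C v)

/-- `φ^+_2(u)`: (other endpoints of) `+`edges of `E ∖ E_H` incident to `u` that are
not cut in `𝒞`. -/
def phi2p [Fintype V] {α : Type*} (β : ℝ) (E : V → V → Prop) (C : V → α) (u : V) :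
    Finset V :=
  Finset.univ.filter (fun v => E u v ∧ ¬ EH β E u v ∧ C u = C v)

/-- `φ^+_3(u)`: (other endpoints of) edges of `E_H` incident to `u` that are not cut
in `𝒞` (this includes the self-loop `uu`). -/
def phi3p [Fintype V] {α : Type*} (β : ℝ) (E : V → V → Prop) (C : V → α) (u : V) :
    Finset V :=
  Finset.univ.filter (fun v => EH β E u v ∧ C u = C v)

/-- `φ^-_1(u)`: (other endpoints of) `−`edges incident to `u` that are not cut in `𝒞`. -/
def phi1m [Fintype V] {α : Type*} (E : V → V → Prop) (C : V → α) (u : V) : Finset V :=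
  Finset.univ.filter (fun v => v ≠ u ∧ ¬ E u v ∧ C u = C v)

/-- `φ^-_2(u)`: (other endpoints of) `−`edges incident to `u` that are cut in `𝒞`. -/
def phi2m [Fintype V] {α : Type*} (E : V → V → Prop) (C : V → α) (u : V) : Finset V :=
  Finset.univ.filter (fun v => v ≠ u ∧ ¬ E u v ∧ C u ≠ C v)

/-! ### Auxiliary lemmas for Statement 6 -/

section Aux
variable [Fintype V] {α : Type*} {E : V → V → Prop} {β : ℝ} {C : V → α}

lemma mem_Nbr {u v : V} : v ∈ Nbr E u ↔ E u v := by simp [Nbr]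

lemma self_mem_Nbr (hrefl : ∀ u, E u u) (u : V) : u ∈ Nbr E u := mem_Nbr.2 (hrefl u)

lemma deg_pos (hrefl : ∀ u, E u u) (u : V) : 0 < deg E u :=
  Finset.card_pos.2 ⟨u, self_mem_Nbr hrefl u⟩

lemma one_le_deg (hrefl : ∀ u, E u u) (u : V) : (1:ℝ) ≤ (deg E u : ℝ) := by
  exact_mod_cast deg_pos hrefl u

lemma deg_real_pos (hrefl : ∀ u, E u u) (u : V) : (0:ℝ) < (deg E u : ℝ) :=
  lt_of_lt_of_le one_pos (one_le_deg hrefl u)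

lemma deg_le_Mdeg_left (u v : V) : (deg E u : ℝ) ≤ (Mdeg E u v : ℝ) := by
  exact_mod_cast le_max_left _ _

lemma deg_le_Mdeg_right (u v : V) : (deg E v : ℝ) ≤ (Mdeg E u v : ℝ) := by
  exact_mod_cast le_max_right _ _

lemma Mdeg_pos (hrefl : ∀ u, E u u) (u v : V) : (0:ℝ) < (Mdeg E u v : ℝ) :=
  lt_of_lt_of_le (deg_real_pos hrefl u) (deg_le_Mdeg_left u v)

lemma Mdeg_comm (u v : V) : Mdeg E u v = Mdeg E v u := max_comm _ _

lemma Nbr_mem_symm (hsymm : ∀ u v, E u v → E v u) {u v : V} :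
    v ∈ Nbr E u ↔ u ∈ Nbr E v := by
  simp only [mem_Nbr]; exact ⟨hsymm u v, hsymm v u⟩

lemma EH_symm (hsymm : ∀ u v, E u v → E v u) {u v : V} :
    EH β E u v ↔ EH β E v u := by
  unfold EH
  rw [symmDiff_comm, Mdeg_comm]
  exact ⟨fun h => ⟨hsymm _ _ h.1, h.2⟩, fun h => ⟨hsymm _ _ h.1, h.2⟩⟩

lemma mem_phi3p {u v : V} : v ∈ phi3p β E C u ↔ EH β E u v ∧ C u = C v := by
  simp [phi3p]

lemma mem_phi2p {u v : V} : v ∈ phi2p β E C u ↔ E u v ∧ ¬ EH β E u v ∧ C u = C v := by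
  simp [phi2p]

lemma phi3p_symm (hsymm : ∀ u v, E u v → E v u) {u v : V} :
    v ∈ phi3p β E C u ↔ u ∈ phi3p β E C v := by
  simp only [mem_phi3p]
  exact ⟨fun h => ⟨(EH_symm hsymm).1 h.1, h.2.symm⟩,
         fun h => ⟨(EH_symm hsymm).1 h.1, h.2.symm⟩⟩

lemma phi3p_subset_Nbr (u : V) : phi3p β E C u ⊆ Nbr E u := by
  intro v hv
  exact mem_Nbr.2 (mem_phi3p.1 hv).1.1

lemma phi2p_subset_Nbr (u : V) : phi2p β E C u ⊆ Nbr E u := by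
  intro v hv
  exact mem_Nbr.2 (mem_phi2p.1 hv).1

lemma phi3p_card_le_deg (u : V) : ((phi3p β E C u).card : ℝ) ≤ (deg E u : ℝ) := by
  exact_mod_cast Finset.card_le_card (phi3p_subset_Nbr u)

lemma phi2p_card_le_deg (u : V) : ((phi2p β E C u).card : ℝ) ≤ (deg E u : ℝ) := by
  exact_mod_cast Finset.card_le_card (phi2p_subset_Nbr u)

/-- The set of (other endpoints of) disagreements at `a`. -/
def Dset (E : V → V → Prop) (C : V → α) (a : V) : Finset V :=
  Finset.univ.filter
    (fun v => (E a v ∧ C a ≠ C v) ∨ (¬ E a v ∧ v ≠ a ∧ C a = C v))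

lemma costC_eq (a : V) : costC E C a = (Dset E C a).card := rfl

/-- `Bad a b`: symmetric difference of the neighborhoods together with common
neighbors in a different cluster. -/
def Bad (E : V → V → Prop) (C : V → α) (a b : V) : Finset V :=
  symmDiff (Nbr E a) (Nbr E b) ∪
    (Nbr E a ∩ Nbr E b).filter (fun w => C w ≠ C a)

lemma Bad_subset (hrefl : ∀ u, E u u) {a b : V} (hC : C a = C b) :
    Bad E C a b ⊆ Dset E C a ∪ Dset E C b := by
  intro w hw
  rw [Bad, Finset.mem_union] at hw
  rw [Finset.mem_union]
  rcases hw with hw | hw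
  · rw [Finset.mem_symmDiff] at hw
    rcases hw with ⟨hwa, hwb⟩ | ⟨hwb, hwa⟩
    · by_cases hCw : C a = C w
      · right
        refine Finset.mem_filter.2 ⟨Finset.mem_univ _, Or.inr ⟨?_, ?_, ?_⟩⟩
        · exact fun h => hwb (mem_Nbr.2 h)
        · intro h; subst h; exact hwb (mem_Nbr.2 (hrefl w))
        · rw [← hC]; exact hCw
      · left
        exact Finset.mem_filter.2 ⟨Finset.mem_univ _, Or.inl ⟨mem_Nbr.1 hwa, hCw⟩⟩
    · by_cases hCw : C b = C w
      · left
        refine Finset.mem_filter.2 ⟨Finset.mem_univ _, Or.inr ⟨?_, ?_, ?_⟩⟩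
        · exact fun h => hwa (mem_Nbr.2 h)
        · intro h; subst h; exact hwa (mem_Nbr.2 (hrefl w))
        · rw [hC]; exact hCw
      · right
        exact Finset.mem_filter.2 ⟨Finset.mem_univ _, Or.inl ⟨mem_Nbr.1 hwb, hCw⟩⟩
  · rw [Finset.mem_filter, Finset.mem_inter] at hw
    left
    exact Finset.mem_filter.2
      ⟨Finset.mem_univ _, Or.inl ⟨mem_Nbr.1 hw.1.1, fun h => hw.2 h.symm⟩⟩

lemma Bad_card (hrefl : ∀ u, E u u) {a b : V} (hC : C a = C b) :
    (Bad E C a b).card ≤ costC E C a + costC E C b := by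
  calc (Bad E C a b).card ≤ (Dset E C a ∪ Dset E C b).card :=
        Finset.card_le_card (Bad_subset hrefl hC)
    _ ≤ (Dset E C a).card + (Dset E C b).card := Finset.card_union_le _ _
    _ = costC E C a + costC E C b := by rw [costC_eq, costC_eq]

lemma symmDiff_card_le (hrefl : ∀ u, E u u) {a b : V} (hC : C a = C b) :
    ((symmDiff (Nbr E a) (Nbr E b)).card : ℝ) ≤
      (costC E C a : ℝ) + (costC E C b : ℝ) := by
  have h1 : (symmDiff (Nbr E a) (Nbr E b)).card ≤ (Bad E C a b).card :=
    Finset.card_le_card Finset.subset_union_left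
  exact_mod_cast h1.trans (Bad_card hrefl hC)

/-- If `sw ∈ E ∖ E_H` and `s, w` are in the same cluster, then
`β·M_{sw} ≤ cost(s) + cost(w)`. -/
lemma betaM_le (hrefl : ∀ u, E u u) {s w : V}
    (hC : C s = C w) (hE : E s w) (hn : ¬ EH β E s w) :
    β * (Mdeg E s w : ℝ) ≤ (costC E C s : ℝ) + (costC E C w : ℝ) := by
  rw [EH, not_and] at hn
  exact (le_of_lt (lt_of_not_ge (hn hE))).trans (symmDiff_card_le hrefl hC)

end Aux
section Charge
variable [Fintype V] {α : Type*}

/-- Common neighbors `w` of `u,v` in the same cluster as `u` for which `uw ∉ E_H`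
or `vw ∉ E_H`. -/
def A2set (β : ℝ) (E : V → V → Prop) (C : V → α) (u v : V) : Finset V :=
  (Nbr E u ∩ Nbr E v).filter
    (fun w => (¬ EH β E u w ∨ ¬ EH β E v w) ∧ C w = C u)

/-- Selection of the endpoint `s ∈ {u,v}` with `sw ∉ E_H`. -/
def Ssel (β : ℝ) (E : V → V → Prop) (u v w : V) : V :=
  if EH β E u w then v else u

variable {E : V → V → Prop} {β : ℝ} {C : V → α}

lemma mem_A2set {u v w : V} :
    w ∈ A2set β E C u v ↔
      w ∈ Nbr E u ∧ w ∈ Nbr E v ∧ (¬ EH β E u w ∨ ¬ EH β E v w) ∧ C w = C u := by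
  unfold A2set
  simp only [Finset.mem_filter, Finset.mem_inter]
  tauto

lemma Ssel_eq_or {u v w : V} : Ssel β E u v w = u ∨ Ssel β E u v w = v := by
  unfold Ssel; split
  · exact Or.inr rfl
  · exact Or.inl rfl

lemma Ssel_spec {u v w : V} (hCuv : C u = C v) (hw : w ∈ A2set β E C u v) :
    w ∈ Nbr E (Ssel β E u v w) ∧ ¬ EH β E (Ssel β E u v w) w ∧
      C (Ssel β E u v w) = C w := by
  rw [mem_A2set] at hw
  obtain ⟨hwu, hwv, hor, hCw⟩ := hw
  unfold Ssel
  by_cases h : EH β E u w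
  · rw [if_pos h]
    refine ⟨hwv, ?_, by rw [← hCuv, hCw]⟩
    rcases hor with h' | h'
    · exact absurd h h'
    · exact h'
  · rw [if_neg h]
    exact ⟨hwu, h, hCw.symm⟩

/-- The mass function: per pair `(u,v)` with `v ∈ φ⁺₃(u)`, vertex `r` receives
`1/M_{uv}` as endpoint `u` or `v`, plus for every `w ∈ A2set` the amount
`1/(M_{uv}·β·M_{s_w w})` as `s_w` or as `w`. -/
def mfun (β : ℝ) (E : V → V → Prop) (C : V → α) (u v r : V) : ℝ :=
  ((Mdeg E u v : ℝ))⁻¹ * ((if r = u then 1 else 0) + (if r = v then 1 else 0))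
  + ∑ w ∈ A2set β E C u v,
      ((Mdeg E u v : ℝ) * (β * (Mdeg E (Ssel β E u v w) w : ℝ)))⁻¹ *
        ((if r = Ssel β E u v w then 1 else 0) + (if r = w then 1 else 0))

omit [Fintype V] in
lemma ind_nonneg (a r : V) : (0:ℝ) ≤ (if r = a then (1:ℝ) else 0) := by
  split <;> norm_num

lemma mfun_nonneg (hβ0 : 0 ≤ β) (u v r : V) : 0 ≤ mfun β E C u v r := by
  unfold mfun
  have h1 : (0:ℝ) ≤ ((Mdeg E u v : ℝ))⁻¹ := by positivity
  refine add_nonneg (mul_nonneg h1 (add_nonneg (ind_nonneg _ _) (ind_nonneg _ _))) ?_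
  refine Finset.sum_nonneg fun w _ => mul_nonneg ?_
    (add_nonneg (ind_nonneg _ _) (ind_nonneg _ _))
  have : (0:ℝ) ≤ (Mdeg E u v : ℝ) * (β * (Mdeg E (Ssel β E u v w) w : ℝ)) := by
    positivity
  exact inv_nonneg.2 this

lemma sum_ind_mul (a : V) (g : V → ℝ) :
    (∑ r : V, (if r = a then (1:ℝ) else 0) * g r) = g a := by
  rw [Finset.sum_eq_single a]
  · simp
  · intro b _ hb; simp [hb]
  · intro h; exact absurd (Finset.mem_univ a) h

/-- Summing the mass function against any weight. -/
lemma sum_mfun_mul (u v : V) (g : V → ℝ) :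
    ∑ r : V, mfun β E C u v r * g r
      = ((Mdeg E u v : ℝ))⁻¹ * (g u + g v)
        + ∑ w ∈ A2set β E C u v,
            ((Mdeg E u v : ℝ) * (β * (Mdeg E (Ssel β E u v w) w : ℝ)))⁻¹ *
              (g (Ssel β E u v w) + g w) := by
  unfold mfun
  rw [Finset.sum_congr rfl (fun r _ => add_mul _ _ _), Finset.sum_add_distrib]
  congr 1
  · rw [Finset.sum_congr rfl (fun r _ => by ring_nf :
      ∀ r ∈ Finset.univ, ((Mdeg E u v : ℝ))⁻¹ *
        ((if r = u then (1:ℝ) else 0) + (if r = v then 1 else 0)) * g r =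
      ((Mdeg E u v : ℝ))⁻¹ * ((if r = u then (1:ℝ) else 0) * g r
        + (if r = v then (1:ℝ) else 0) * g r))]
    rw [← Finset.mul_sum, Finset.sum_add_distrib, sum_ind_mul, sum_ind_mul]
  · rw [Finset.sum_congr rfl (fun r _ => Finset.sum_mul _ _ _), Finset.sum_comm]
    refine Finset.sum_congr rfl fun w _ => ?_
    rw [Finset.sum_congr rfl (fun r _ => by ring_nf :
      ∀ r ∈ Finset.univ, ((Mdeg E u v : ℝ) * (β * (Mdeg E (Ssel β E u v w) w : ℝ)))⁻¹ *
        ((if r = Ssel β E u v w then (1:ℝ) else 0) + (if r = w then 1 else 0)) * g r =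
      ((Mdeg E u v : ℝ) * (β * (Mdeg E (Ssel β E u v w) w : ℝ)))⁻¹ *
        ((if r = Ssel β E u v w then (1:ℝ) else 0) * g r
          + (if r = w then (1:ℝ) else 0) * g r))]
    rw [← Finset.mul_sum, Finset.sum_add_distrib, sum_ind_mul, sum_ind_mul]

end Charge
section PairBound
variable [Fintype V] {α : Type*} {E : V → V → Prop} {β : ℝ} {C : V → α}

lemma mem_NH {u w : V} : w ∈ NH β E u ↔ EH β E u w := by simp [NH]

lemma cover_subset {u v : V} :
    (Nbr E u ∪ Nbr E v) \ (NH β E u ∩ NH β E v) ⊆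
      Bad E C u v ∪ A2set β E C u v := by
  intro w hw
  rw [Finset.mem_sdiff, Finset.mem_inter, not_and_or] at hw
  obtain ⟨hwu, hnot⟩ := hw
  rw [Finset.mem_union]
  by_cases hin : w ∈ Nbr E u ∩ Nbr E v
  · rw [Finset.mem_inter] at hin
    by_cases hCw : C w = C u
    · right
      rw [mem_A2set]
      refine ⟨hin.1, hin.2, ?_, hCw⟩
      rcases hnot with h | h
      · exact Or.inl (fun h' => h (mem_NH.2 h'))
      · exact Or.inr (fun h' => h (mem_NH.2 h'))
    · left
      rw [Bad, Finset.mem_union]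
      right
      exact Finset.mem_filter.2 ⟨Finset.mem_inter.2 hin, hCw⟩
  · left
    rw [Bad, Finset.mem_union]
    left
    rw [Finset.mem_symmDiff]
    rw [Finset.mem_union] at hwu
    rw [Finset.mem_inter, not_and_or] at hin
    rcases hwu with h | h
    · rcases hin with h' | h'
      · exact absurd h h'
      · exact Or.inl ⟨h, h'⟩
    · rcases hin with h' | h'
      · exact Or.inr ⟨h, h'⟩
      · exact absurd h h'

/-- Core inequality for part (a), per pair. -/
lemma pair_bound (hrefl : ∀ u, E u u) (hβ0 : 0 < β) {u v : V}
    (hv : v ∈ phi3p β E C u) :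
    xval β E u v ≤ ∑ r : V, mfun β E C u v r * (costC E C r : ℝ) := by
  have hCuv : C u = C v := (mem_phi3p.1 hv).2
  rw [sum_mfun_mul]
  have hM : (0:ℝ) < (Mdeg E u v : ℝ) := Mdeg_pos hrefl u v
  -- the per-w inequality
  have hw1 : ∀ w ∈ A2set β E C u v,
      (1:ℝ) ≤ (β * (Mdeg E (Ssel β E u v w) w : ℝ))⁻¹ *
        ((costC E C (Ssel β E u v w) : ℝ) + (costC E C w : ℝ)) := by
    intro w hw
    obtain ⟨hmem, hnEH, hCs⟩ := Ssel_spec hCuv hw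
    have hpos : (0:ℝ) < β * (Mdeg E (Ssel β E u v w) w : ℝ) :=
      mul_pos hβ0 (Mdeg_pos hrefl _ _)
    rw [inv_mul_eq_div, le_div_iff₀ hpos, one_mul]
    exact betaM_le hrefl hCs (mem_Nbr.1 hmem) hnEH
  by_cases huv : u = v
  · rw [xval, if_pos huv]
    refine add_nonneg (mul_nonneg (inv_nonneg.2 hM.le)
      (add_nonneg (Nat.cast_nonneg _) (Nat.cast_nonneg _))) ?_
    refine Finset.sum_nonneg fun w hw => mul_nonneg ?_
      (add_nonneg (Nat.cast_nonneg _) (Nat.cast_nonneg _))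
    have : (0:ℝ) ≤ (Mdeg E u v : ℝ) * (β * (Mdeg E (Ssel β E u v w) w : ℝ)) := by
      positivity
    exact inv_nonneg.2 this
  -- main case
  rw [xval, if_neg huv]
  -- counting chain (over ℕ)
  have hcount : Mdeg E u v ≤ (NH β E u ∩ NH β E v).card +
      (costC E C u + costC E C v) + (A2set β E C u v).card := by
    have h1 : Mdeg E u v ≤ (Nbr E u ∪ Nbr E v).card := by
      rw [Mdeg, max_le_iff]
      exact ⟨Finset.card_le_card Finset.subset_union_left,
        Finset.card_le_card Finset.subset_union_right⟩
    have h2 : (Nbr E u ∪ Nbr E v).card ≤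
        ((Nbr E u ∪ Nbr E v) \ (NH β E u ∩ NH β E v)).card +
          (NH β E u ∩ NH β E v).card :=
      Finset.card_le_card_sdiff_add_card
    have h3 : ((Nbr E u ∪ Nbr E v) \ (NH β E u ∩ NH β E v)).card ≤
        (Bad E C u v).card + (A2set β E C u v).card :=
      (Finset.card_le_card cover_subset).trans (Finset.card_union_le _ _)
    have h4 := Bad_card hrefl hCuv
    omega
  -- real version
  have hA2 : ((A2set β E C u v).card : ℝ) ≤
      ∑ w ∈ A2set β E C u v, (β * (Mdeg E (Ssel β E u v w) w : ℝ))⁻¹ *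
        ((costC E C (Ssel β E u v w) : ℝ) + (costC E C w : ℝ)) := by
    calc ((A2set β E C u v).card : ℝ) = ∑ _w ∈ A2set β E C u v, (1:ℝ) := by
          rw [Finset.sum_const, nsmul_eq_mul, mul_one]
      _ ≤ _ := Finset.sum_le_sum hw1
  have key : (Mdeg E u v : ℝ) - ((NH β E u ∩ NH β E v).card : ℝ) ≤
      ((costC E C u : ℝ) + (costC E C v : ℝ)) +
        ∑ w ∈ A2set β E C u v, (β * (Mdeg E (Ssel β E u v w) w : ℝ))⁻¹ *
          ((costC E C (Ssel β E u v w) : ℝ) + (costC E C w : ℝ)) := by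
    have := hcount
    have h' : (Mdeg E u v : ℝ) ≤ ((NH β E u ∩ NH β E v).card : ℝ) +
        ((costC E C u : ℝ) + (costC E C v : ℝ)) + ((A2set β E C u v).card : ℝ) := by
      exact_mod_cast this
    linarith
  calc 1 - ((NH β E u ∩ NH β E v).card : ℝ) / (Mdeg E u v : ℝ)
      = ((Mdeg E u v : ℝ) - ((NH β E u ∩ NH β E v).card : ℝ)) * (Mdeg E u v : ℝ)⁻¹ := by
        field_simp
    _ ≤ (((costC E C u : ℝ) + (costC E C v : ℝ)) +
          ∑ w ∈ A2set β E C u v, (β * (Mdeg E (Ssel β E u v w) w : ℝ))⁻¹ *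
            ((costC E C (Ssel β E u v w) : ℝ) + (costC E C w : ℝ))) *
          (Mdeg E u v : ℝ)⁻¹ :=
        mul_le_mul_of_nonneg_right key (inv_nonneg.2 hM.le)
    _ = _ := by
        rw [add_mul, Finset.sum_mul]
        congr 1
        · ring
        · refine Finset.sum_congr rfl fun w _ => ?_
          rw [mul_inv]
          ring

end PairBound
section Tally
variable [Fintype V] {α : Type*} {E : V → V → Prop} {β : ℝ} {C : V → α}

/-- Total mass of a pair `(u,v)`, `v ∈ φ⁺₃(u)`: at most
`2/d(u) + 2|φ⁺₂(u)|/(β d(u)²) + 2/(β d(u))`. -/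
lemma sum_mfun_total (hrefl : ∀ u, E u u) (hsymm : ∀ u v, E u v → E v u)
    (hβ0 : 0 < β) {u v : V} (hv : v ∈ phi3p β E C u) :
    ∑ r : V, mfun β E C u v r ≤
      2 * (deg E u : ℝ)⁻¹
      + 2 * (((phi2p β E C u).card : ℝ) * ((deg E u : ℝ) * (β * (deg E u : ℝ)))⁻¹)
      + 2 * (β * (deg E u : ℝ))⁻¹ := by
  have hCuv : C u = C v := (mem_phi3p.1 hv).2
  have hdu : (0:ℝ) < (deg E u : ℝ) := deg_real_pos hrefl u
  have hdv : (0:ℝ) < (deg E v : ℝ) := deg_real_pos hrefl v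
  have hM : (0:ℝ) < (Mdeg E u v : ℝ) := Mdeg_pos hrefl u v
  have h0 : ∑ r : V, mfun β E C u v r = ∑ r : V, mfun β E C u v r * (fun _ => (1:ℝ)) r := by
    simp
  rw [h0, sum_mfun_mul]
  -- split the A2 sum according to `EH β E u w`
  have hsplit :
      ∑ w ∈ A2set β E C u v,
          ((Mdeg E u v : ℝ) * (β * (Mdeg E (Ssel β E u v w) w : ℝ)))⁻¹ * (1 + 1)
        = ∑ w ∈ (A2set β E C u v).filter (fun w => EH β E u w),
            ((Mdeg E u v : ℝ) * (β * (Mdeg E (Ssel β E u v w) w : ℝ)))⁻¹ * (1 + 1)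
          + ∑ w ∈ (A2set β E C u v).filter (fun w => ¬ EH β E u w),
            ((Mdeg E u v : ℝ) * (β * (Mdeg E (Ssel β E u v w) w : ℝ)))⁻¹ * (1 + 1) :=
    (Finset.sum_filter_add_sum_filter_not _ _ _).symm
  rw [hsplit]
  -- first piece: `1/M ≤ 1/d(u)`
  have hA : ((Mdeg E u v : ℝ))⁻¹ * (1 + 1) ≤ 2 * (deg E u : ℝ)⁻¹ := by
    have : (Mdeg E u v : ℝ)⁻¹ ≤ (deg E u : ℝ)⁻¹ := by
      apply inv_anti₀ hdu (deg_le_Mdeg_left u v)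
    linarith
  -- second piece: `w` with `EH u w`, so `Ssel = v`, `w ∈ φ⁺₂(v)`
  have hB : ∑ w ∈ (A2set β E C u v).filter (fun w => EH β E u w),
      ((Mdeg E u v : ℝ) * (β * (Mdeg E (Ssel β E u v w) w : ℝ)))⁻¹ * (1 + 1)
      ≤ 2 * (β * (deg E u : ℝ))⁻¹ := by
    have hsub : (A2set β E C u v).filter (fun w => EH β E u w) ⊆ phi2p β E C v := by
      intro w hw
      rw [Finset.mem_filter, mem_A2set] at hw
      obtain ⟨⟨hwu, hwv, hor, hCw⟩, hEH⟩ := hw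
      rcases hor with h | h
      · exact absurd hEH h
      · exact mem_phi2p.2 ⟨mem_Nbr.1 hwv, h, by rw [← hCuv, ← hCw]⟩
    have hterm : ∀ w ∈ (A2set β E C u v).filter (fun w => EH β E u w),
        ((Mdeg E u v : ℝ) * (β * (Mdeg E (Ssel β E u v w) w : ℝ)))⁻¹ * (1 + 1)
          ≤ 2 * ((deg E u : ℝ) * (β * (deg E v : ℝ)))⁻¹ := by
      intro w hw
      rw [Finset.mem_filter] at hw
      have hS : Ssel β E u v w = v := by rw [Ssel, if_pos hw.2]
      rw [hS]
      have h1 : (deg E u : ℝ) * (β * (deg E v : ℝ)) ≤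
          (Mdeg E u v : ℝ) * (β * (Mdeg E v w : ℝ)) := by
        have h1a := deg_le_Mdeg_left (E:=E) u v
        have h1b := deg_le_Mdeg_left (E:=E) v w
        gcongr
      have h2 : ((Mdeg E u v : ℝ) * (β * (Mdeg E v w : ℝ)))⁻¹ ≤
          ((deg E u : ℝ) * (β * (deg E v : ℝ)))⁻¹ := by
        apply inv_anti₀ (by positivity) h1
      linarith
    calc ∑ w ∈ (A2set β E C u v).filter (fun w => EH β E u w),
          ((Mdeg E u v : ℝ) * (β * (Mdeg E (Ssel β E u v w) w : ℝ)))⁻¹ * (1 + 1)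
        ≤ ∑ _w ∈ (A2set β E C u v).filter (fun w => EH β E u w),
            2 * ((deg E u : ℝ) * (β * (deg E v : ℝ)))⁻¹ := Finset.sum_le_sum hterm
      _ = (((A2set β E C u v).filter (fun w => EH β E u w)).card : ℝ) *
            (2 * ((deg E u : ℝ) * (β * (deg E v : ℝ)))⁻¹) := by
          rw [Finset.sum_const, nsmul_eq_mul]
      _ ≤ (deg E v : ℝ) * (2 * ((deg E u : ℝ) * (β * (deg E v : ℝ)))⁻¹) := by
          apply mul_le_mul_of_nonneg_right _ (by positivity)
          calc (((A2set β E C u v).filter (fun w => EH β E u w)).card : ℝ)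
              ≤ ((phi2p β E C v).card : ℝ) := by
                exact_mod_cast Finset.card_le_card hsub
            _ ≤ (deg E v : ℝ) := phi2p_card_le_deg v
      _ = 2 * (β * (deg E u : ℝ))⁻¹ := by field_simp
  -- third piece: `w` with `¬ EH u w`, so `Ssel = u`, `w ∈ φ⁺₂(u)`
  have hC : ∑ w ∈ (A2set β E C u v).filter (fun w => ¬ EH β E u w),
      ((Mdeg E u v : ℝ) * (β * (Mdeg E (Ssel β E u v w) w : ℝ)))⁻¹ * (1 + 1)
      ≤ 2 * (((phi2p β E C u).card : ℝ) * ((deg E u : ℝ) * (β * (deg E u : ℝ)))⁻¹) := by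
    have hsub : (A2set β E C u v).filter (fun w => ¬ EH β E u w) ⊆ phi2p β E C u := by
      intro w hw
      rw [Finset.mem_filter, mem_A2set] at hw
      obtain ⟨⟨hwu, hwv, hor, hCw⟩, hEH⟩ := hw
      exact mem_phi2p.2 ⟨mem_Nbr.1 hwu, hEH, hCw.symm⟩
    have hterm : ∀ w ∈ (A2set β E C u v).filter (fun w => ¬ EH β E u w),
        ((Mdeg E u v : ℝ) * (β * (Mdeg E (Ssel β E u v w) w : ℝ)))⁻¹ * (1 + 1)
          ≤ 2 * ((deg E u : ℝ) * (β * (deg E u : ℝ)))⁻¹ := by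
      intro w hw
      rw [Finset.mem_filter] at hw
      have hS : Ssel β E u v w = u := by rw [Ssel, if_neg hw.2]
      rw [hS]
      have h1 : (deg E u : ℝ) * (β * (deg E u : ℝ)) ≤
          (Mdeg E u v : ℝ) * (β * (Mdeg E u w : ℝ)) := by
        have h1a := deg_le_Mdeg_left (E:=E) u v
        have h1b := deg_le_Mdeg_left (E:=E) u w
        gcongr
      have h2 : ((Mdeg E u v : ℝ) * (β * (Mdeg E u w : ℝ)))⁻¹ ≤
          ((deg E u : ℝ) * (β * (deg E u : ℝ)))⁻¹ := by
        apply inv_anti₀ (by positivity) h1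
      linarith
    calc ∑ w ∈ (A2set β E C u v).filter (fun w => ¬ EH β E u w),
          ((Mdeg E u v : ℝ) * (β * (Mdeg E (Ssel β E u v w) w : ℝ)))⁻¹ * (1 + 1)
        ≤ ∑ _w ∈ (A2set β E C u v).filter (fun w => ¬ EH β E u w),
            2 * ((deg E u : ℝ) * (β * (deg E u : ℝ)))⁻¹ := Finset.sum_le_sum hterm
      _ = (((A2set β E C u v).filter (fun w => ¬ EH β E u w)).card : ℝ) *
            (2 * ((deg E u : ℝ) * (β * (deg E u : ℝ)))⁻¹) := by
          rw [Finset.sum_const, nsmul_eq_mul]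
      _ ≤ ((phi2p β E C u).card : ℝ) *
            (2 * ((deg E u : ℝ) * (β * (deg E u : ℝ)))⁻¹) := by
          apply mul_le_mul_of_nonneg_right _ (by positivity)
          exact_mod_cast Finset.card_le_card hsub
      _ = 2 * (((phi2p β E C u).card : ℝ) * ((deg E u : ℝ) * (β * (deg E u : ℝ)))⁻¹) := by
          ring
  linarith

end Tally
section TallyB
variable [Fintype V] {α : Type*} {E : V → V → Prop} {β : ℝ} {C : V → α}

/-- Generic tally: summing `K·(𝟙[r=u] + 𝟙[r=v])` over pairs gives at most
`2·|φ⁺₃(r)|·K`. -/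
lemma tallyA (hsymm : ∀ u v, E u v → E v u) (r : V) (U : Finset V) {K : ℝ}
    (hK : 0 ≤ K) :
    ∑ u ∈ U, ∑ v ∈ phi3p β E C u,
        ((if r = u then K else 0) + (if r = v then K else 0))
      ≤ 2 * ((phi3p β E C r).card : ℝ) * K := by
  have h1 : ∑ u ∈ U, ∑ v ∈ phi3p β E C u, (if r = u then K else 0)
      ≤ ((phi3p β E C r).card : ℝ) * K := by
    have heq : ∀ u, ∑ _v ∈ phi3p β E C u, (if r = u then K else 0)
        = (if r = u then ((phi3p β E C u).card : ℝ) * K else 0) := by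
      intro u
      by_cases h : r = u <;> simp [h, Finset.sum_const, nsmul_eq_mul]
    rw [Finset.sum_congr rfl (fun u _ => heq u)]
    calc ∑ u ∈ U, (if r = u then ((phi3p β E C u).card : ℝ) * K else 0)
        ≤ ∑ u : V, (if r = u then ((phi3p β E C u).card : ℝ) * K else 0) := by
          apply Finset.sum_le_sum_of_subset_of_nonneg (Finset.subset_univ U)
          intro i _ _
          split
          · positivity
          · exact le_refl 0
      _ = ((phi3p β E C r).card : ℝ) * K := by
          rw [Finset.sum_ite_eq]
          simp
  have h2 : ∑ u ∈ U, ∑ v ∈ phi3p β E C u, (if r = v then K else 0)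
      ≤ ((phi3p β E C r).card : ℝ) * K := by
    have heq : ∀ u, ∑ v ∈ phi3p β E C u, (if r = v then K else 0)
        = (if r ∈ phi3p β E C u then K else 0) := by
      intro u
      rw [Finset.sum_ite_eq]
    rw [Finset.sum_congr rfl (fun u _ => heq u)]
    have hpt : ∀ u, (if r ∈ phi3p β E C u then K else 0)
        ≤ (if u ∈ phi3p β E C r then K else 0) := by
      intro u
      by_cases h : r ∈ phi3p β E C u
      · rw [if_pos h, if_pos ((phi3p_symm hsymm).1 h)]
      · rw [if_neg h]
        split
        · exact hK
        · exact le_refl 0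
    calc ∑ u ∈ U, (if r ∈ phi3p β E C u then K else 0)
        ≤ ∑ u ∈ U, (if u ∈ phi3p β E C r then K else 0) :=
          Finset.sum_le_sum (fun u _ => hpt u)
      _ ≤ ∑ u : V, (if u ∈ phi3p β E C r then K else 0) := by
          apply Finset.sum_le_sum_of_subset_of_nonneg (Finset.subset_univ U)
          intro i _ _
          split
          · exact hK
          · exact le_refl 0
      _ = ((phi3p β E C r).card : ℝ) * K := by
          rw [Finset.sum_ite_mem, Finset.univ_inter, Finset.sum_const, nsmul_eq_mul]
  calc ∑ u ∈ U, ∑ v ∈ phi3p β E C u,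
        ((if r = u then K else 0) + (if r = v then K else 0))
      = ∑ u ∈ U, ∑ v ∈ phi3p β E C u, (if r = u then K else 0)
        + ∑ u ∈ U, ∑ v ∈ phi3p β E C u, (if r = v then K else 0) := by
        rw [← Finset.sum_add_distrib]
        exact Finset.sum_congr rfl fun u _ => Finset.sum_add_distrib
    _ ≤ ((phi3p β E C r).card : ℝ) * K + ((phi3p β E C r).card : ℝ) * K :=
        add_le_add h1 h2
    _ = 2 * ((phi3p β E C r).card : ℝ) * K := by ring

/-- Arithmetic: `|φ⁺₃(s) ∩ N(r)| / (d(s)·β·M_{sr}) ≤ 1/(β·d(r))`. -/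
lemma card_inter_mul_inv_le (hrefl : ∀ u, E u u) (hβ0 : 0 < β) (s r : V) :
    ((phi3p β E C s ∩ Nbr E r).card : ℝ) *
        ((deg E s : ℝ) * (β * (Mdeg E s r : ℝ)))⁻¹
      ≤ (β * (deg E r : ℝ))⁻¹ := by
  have hds : (0:ℝ) < (deg E s : ℝ) := deg_real_pos hrefl s
  have hdr : (0:ℝ) < (deg E r : ℝ) := deg_real_pos hrefl r
  have hns : ((phi3p β E C s ∩ Nbr E r).card : ℝ) ≤ (deg E s : ℝ) := by
    exact_mod_cast Finset.card_le_card
      ((Finset.inter_subset_left).trans (phi3p_subset_Nbr s))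
  have hnr : ((phi3p β E C s ∩ Nbr E r).card : ℝ) ≤ (deg E r : ℝ) := by
    exact_mod_cast Finset.card_le_card (Finset.inter_subset_right)
  have hn0 : (0:ℝ) ≤ ((phi3p β E C s ∩ Nbr E r).card : ℝ) := Nat.cast_nonneg _
  have hX : (0:ℝ) < (deg E s : ℝ) * (β * (Mdeg E s r : ℝ)) := by
    have := Mdeg_pos hrefl s r
    positivity
  have hY : (0:ℝ) < β * (deg E r : ℝ) := by positivity
  have hMcast : (Mdeg E s r : ℝ) = max (deg E s : ℝ) (deg E r : ℝ) := by
    rw [Mdeg]; push_cast; rfl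
  set n : ℝ := ((phi3p β E C s ∩ Nbr E r).card : ℝ)
  have key : n * (deg E r : ℝ) ≤ (deg E s : ℝ) * max (deg E s : ℝ) (deg E r : ℝ) := by
    rcases le_total (deg E s : ℝ) (deg E r : ℝ) with h | h
    · rw [max_eq_right h]
      exact mul_le_mul_of_nonneg_right hns hdr.le
    · rw [max_eq_left h]
      exact mul_le_mul (hnr.trans h) h hdr.le hds.le
  rw [← div_eq_mul_inv, ← one_div, div_le_div_iff₀ hX hY]
  have key2 := mul_le_mul_of_nonneg_left key hβ0.le
  rw [hMcast]
  nlinarith [key2]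

end TallyB
section TallyC
variable [Fintype V] {α : Type*} {E : V → V → Prop} {β : ℝ} {C : V → α}

/-- Tally for the `w`-masses (part (b), middle term). -/
lemma tallyB (hrefl : ∀ u, E u u) (hsymm : ∀ u v, E u v → E v u) (hβ0 : 0 < β)
    (r : V) (U : Finset V) :
    ∑ u ∈ U, ∑ v ∈ phi3p β E C u,
        ((if u ∈ phi2p β E C r ∧ v ∈ Nbr E r then
            ((deg E u : ℝ) * (β * (Mdeg E u r : ℝ)))⁻¹ else 0)
         + (if v ∈ phi2p β E C r ∧ u ∈ Nbr E r then
            ((deg E v : ℝ) * (β * (Mdeg E v r : ℝ)))⁻¹ else 0))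
      ≤ 2 * ((phi2p β E C r).card : ℝ) * (β * (deg E r : ℝ))⁻¹ := by
  have hbd : (0:ℝ) ≤ (β * (deg E r : ℝ))⁻¹ := by
    have := deg_real_pos hrefl r
    positivity
  have h1 : ∑ u ∈ U, ∑ v ∈ phi3p β E C u,
      (if u ∈ phi2p β E C r ∧ v ∈ Nbr E r then
          ((deg E u : ℝ) * (β * (Mdeg E u r : ℝ)))⁻¹ else 0)
      ≤ ((phi2p β E C r).card : ℝ) * (β * (deg E r : ℝ))⁻¹ := by
    have heq : ∀ u, ∑ v ∈ phi3p β E C u,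
        (if u ∈ phi2p β E C r ∧ v ∈ Nbr E r then
          ((deg E u : ℝ) * (β * (Mdeg E u r : ℝ)))⁻¹ else 0)
        = (if u ∈ phi2p β E C r then
            ((phi3p β E C u ∩ Nbr E r).card : ℝ) *
              ((deg E u : ℝ) * (β * (Mdeg E u r : ℝ)))⁻¹ else 0) := by
      intro u
      by_cases hu : u ∈ phi2p β E C r
      · simp only [hu, true_and, if_true]
        rw [Finset.sum_ite_mem, Finset.sum_const, nsmul_eq_mul]
      · simp [hu]
    rw [Finset.sum_congr rfl (fun u _ => heq u)]
    have hpt : ∀ u, (if u ∈ phi2p β E C r then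
          ((phi3p β E C u ∩ Nbr E r).card : ℝ) *
            ((deg E u : ℝ) * (β * (Mdeg E u r : ℝ)))⁻¹ else 0)
        ≤ (if u ∈ phi2p β E C r then (β * (deg E r : ℝ))⁻¹ else 0) := by
      intro u
      by_cases hu : u ∈ phi2p β E C r
      · rw [if_pos hu, if_pos hu]
        exact card_inter_mul_inv_le hrefl hβ0 u r
      · rw [if_neg hu, if_neg hu]
    calc _ ≤ ∑ u ∈ U, (if u ∈ phi2p β E C r then (β * (deg E r : ℝ))⁻¹ else 0) :=
          Finset.sum_le_sum (fun u _ => hpt u)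
      _ ≤ ∑ u : V, (if u ∈ phi2p β E C r then (β * (deg E r : ℝ))⁻¹ else 0) := by
          apply Finset.sum_le_sum_of_subset_of_nonneg (Finset.subset_univ U)
          intro i _ _
          split
          · exact hbd
          · exact le_refl 0
      _ = ((phi2p β E C r).card : ℝ) * (β * (deg E r : ℝ))⁻¹ := by
          rw [Finset.sum_ite_mem, Finset.univ_inter, Finset.sum_const, nsmul_eq_mul]
  have h2 : ∑ u ∈ U, ∑ v ∈ phi3p β E C u,
      (if v ∈ phi2p β E C r ∧ u ∈ Nbr E r then
          ((deg E v : ℝ) * (β * (Mdeg E v r : ℝ)))⁻¹ else 0)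
      ≤ ((phi2p β E C r).card : ℝ) * (β * (deg E r : ℝ))⁻¹ := by
    have hswap : ∑ u ∈ U, ∑ v ∈ phi3p β E C u,
        (if v ∈ phi2p β E C r ∧ u ∈ Nbr E r then
            ((deg E v : ℝ) * (β * (Mdeg E v r : ℝ)))⁻¹ else 0)
        = ∑ v : V, ∑ u ∈ U,
            (if v ∈ phi3p β E C u then
              (if v ∈ phi2p β E C r ∧ u ∈ Nbr E r then
                ((deg E v : ℝ) * (β * (Mdeg E v r : ℝ)))⁻¹ else 0) else 0) := by
      rw [Finset.sum_comm]
      refine Finset.sum_congr rfl fun u _ => ?_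
      rw [Finset.sum_ite_mem, Finset.univ_inter]
    rw [hswap]
    have hpt : ∀ v, ∀ u ∈ U,
        (if v ∈ phi3p β E C u then
          (if v ∈ phi2p β E C r ∧ u ∈ Nbr E r then
            ((deg E v : ℝ) * (β * (Mdeg E v r : ℝ)))⁻¹ else 0) else 0)
        ≤ (if v ∈ phi2p β E C r then
            (if u ∈ phi3p β E C v ∩ Nbr E r then
              ((deg E v : ℝ) * (β * (Mdeg E v r : ℝ)))⁻¹ else 0) else 0) := by
      intro v u _
      have hnn : (0:ℝ) ≤ ((deg E v : ℝ) * (β * (Mdeg E v r : ℝ)))⁻¹ := by positivity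
      by_cases h3 : v ∈ phi3p β E C u
      · by_cases h4 : v ∈ phi2p β E C r ∧ u ∈ Nbr E r
        · rw [if_pos h3, if_pos h4, if_pos h4.1, if_pos]
          exact Finset.mem_inter.2 ⟨(phi3p_symm hsymm).1 h3, h4.2⟩
        · rw [if_pos h3, if_neg h4]
          split
          · split
            · exact hnn
            · exact le_refl 0
          · exact le_refl 0
      · rw [if_neg h3]
        split
        · split
          · exact hnn
          · exact le_refl 0
        · exact le_refl 0
    have hinner : ∀ v, ∑ u ∈ U,
        (if v ∈ phi3p β E C u then
          (if v ∈ phi2p β E C r ∧ u ∈ Nbr E r then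
            ((deg E v : ℝ) * (β * (Mdeg E v r : ℝ)))⁻¹ else 0) else 0)
        ≤ (if v ∈ phi2p β E C r then (β * (deg E r : ℝ))⁻¹ else 0) := by
      intro v
      have hnn : (0:ℝ) ≤ ((deg E v : ℝ) * (β * (Mdeg E v r : ℝ)))⁻¹ := by positivity
      calc ∑ u ∈ U, _ ≤ ∑ u ∈ U,
            (if v ∈ phi2p β E C r then
              (if u ∈ phi3p β E C v ∩ Nbr E r then
                ((deg E v : ℝ) * (β * (Mdeg E v r : ℝ)))⁻¹ else 0) else 0) :=
            Finset.sum_le_sum (hpt v)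
        _ ≤ ∑ u : V, (if v ∈ phi2p β E C r then
              (if u ∈ phi3p β E C v ∩ Nbr E r then
                ((deg E v : ℝ) * (β * (Mdeg E v r : ℝ)))⁻¹ else 0) else 0) := by
            apply Finset.sum_le_sum_of_subset_of_nonneg (Finset.subset_univ U)
            intro i _ _
            split
            · split
              · exact hnn
              · exact le_refl 0
            · exact le_refl 0
        _ ≤ (if v ∈ phi2p β E C r then (β * (deg E r : ℝ))⁻¹ else 0) := by
            by_cases hv2 : v ∈ phi2p β E C r
            · simp only [hv2, if_true]
              rw [Finset.sum_ite_mem, Finset.univ_inter, Finset.sum_const, nsmul_eq_mul]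
              exact card_inter_mul_inv_le hrefl hβ0 v r
            · simp [hv2]
    calc _ ≤ ∑ v : V, (if v ∈ phi2p β E C r then (β * (deg E r : ℝ))⁻¹ else 0) :=
          Finset.sum_le_sum (fun v _ => hinner v)
      _ = ((phi2p β E C r).card : ℝ) * (β * (deg E r : ℝ))⁻¹ := by
          rw [Finset.sum_ite_mem, Finset.univ_inter, Finset.sum_const, nsmul_eq_mul]
  calc ∑ u ∈ U, ∑ v ∈ phi3p β E C u, (_ + _)
      = (∑ u ∈ U, ∑ v ∈ phi3p β E C u,
          (if u ∈ phi2p β E C r ∧ v ∈ Nbr E r then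
            ((deg E u : ℝ) * (β * (Mdeg E u r : ℝ)))⁻¹ else 0))
        + ∑ u ∈ U, ∑ v ∈ phi3p β E C u,
          (if v ∈ phi2p β E C r ∧ u ∈ Nbr E r then
            ((deg E v : ℝ) * (β * (Mdeg E v r : ℝ)))⁻¹ else 0) := by
        rw [← Finset.sum_add_distrib]
        exact Finset.sum_congr rfl fun u _ => Finset.sum_add_distrib
    _ ≤ _ := by
        have := add_le_add h1 h2
        calc _ ≤ _ := this
          _ = 2 * ((phi2p β E C r).card : ℝ) * (β * (deg E r : ℝ))⁻¹ := by ring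

end TallyC
section MassBound
variable [Fintype V] {α : Type*} {E : V → V → Prop} {β : ℝ} {C : V → α}

/-- Part (b): the total mass received by a vertex `r`. -/
lemma mass_bound (hrefl : ∀ u, E u u) (hsymm : ∀ u v, E u v → E v u)
    (hβ0 : 0 < β) (U : Finset V) (r : V) :
    ∑ u ∈ U, ∑ v ∈ phi3p β E C u, mfun β E C u v r ≤
      2 * (((phi2p β E C r).card : ℝ) * ((phi3p β E C r).card : ℝ) /
            (β * (deg E r : ℝ) ^ 2)
          + ((phi2p β E C r).card : ℝ) / (β * (deg E r : ℝ))
          + ((phi3p β E C r).card : ℝ) / (deg E r : ℝ)) := by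
  have hdr : (0:ℝ) < (deg E r : ℝ) := deg_real_pos hrefl r
  set K1 : ℝ := (deg E r : ℝ)⁻¹ with hK1def
  set K2 : ℝ := ((phi2p β E C r).card : ℝ) * ((deg E r : ℝ) * (β * (deg E r : ℝ)))⁻¹
    with hK2def
  have hK1 : 0 ≤ K1 := by positivity
  have hK2 : 0 ≤ K2 := by positivity
  -- pointwise bounds
  have hpt : ∀ u, ∀ v ∈ phi3p β E C u, mfun β E C u v r ≤
      ((if r = u then K1 else 0) + (if r = v then K1 else 0))
      + ((if r = u then K2 else 0) + (if r = v then K2 else 0))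
      + ((if u ∈ phi2p β E C r ∧ v ∈ Nbr E r then
            ((deg E u : ℝ) * (β * (Mdeg E u r : ℝ)))⁻¹ else 0)
         + (if v ∈ phi2p β E C r ∧ u ∈ Nbr E r then
            ((deg E v : ℝ) * (β * (Mdeg E v r : ℝ)))⁻¹ else 0)) := by
    intro u v hv
    have hCuv : C u = C v := (mem_phi3p.1 hv).2
    have hM : (0:ℝ) < (Mdeg E u v : ℝ) := Mdeg_pos hrefl u v
    -- first piece
    have hb1 : ((Mdeg E u v : ℝ))⁻¹ *
        ((if r = u then (1:ℝ) else 0) + (if r = v then 1 else 0))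
        ≤ (if r = u then K1 else 0) + (if r = v then K1 else 0) := by
      have e1 : ((Mdeg E u v : ℝ))⁻¹ * (if r = u then (1:ℝ) else 0)
          ≤ (if r = u then K1 else 0) := by
        by_cases hru : r = u
        · rw [if_pos hru, if_pos hru, mul_one, hK1def, hru]
          exact inv_anti₀ (deg_real_pos hrefl u) (deg_le_Mdeg_left u v)
        · rw [if_neg hru, if_neg hru, mul_zero]
      have e2 : ((Mdeg E u v : ℝ))⁻¹ * (if r = v then (1:ℝ) else 0)
          ≤ (if r = v then K1 else 0) := by
        by_cases hrv : r = v
        · rw [if_pos hrv, if_pos hrv, mul_one, hK1def, hrv]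
          exact inv_anti₀ (deg_real_pos hrefl v) (deg_le_Mdeg_right u v)
        · rw [if_neg hrv, if_neg hrv, mul_zero]
      rw [mul_add]
      exact add_le_add e1 e2
    -- the `A2` sum, split into the `Ssel`-part and the `w`-part
    have hsplitA2 : ∑ w ∈ A2set β E C u v,
        ((Mdeg E u v : ℝ) * (β * (Mdeg E (Ssel β E u v w) w : ℝ)))⁻¹ *
          ((if r = Ssel β E u v w then (1:ℝ) else 0) + (if r = w then 1 else 0))
        = (∑ w ∈ A2set β E C u v,
            (if r = Ssel β E u v w then
              ((Mdeg E u v : ℝ) * (β * (Mdeg E (Ssel β E u v w) w : ℝ)))⁻¹ else 0))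
          + ∑ w ∈ A2set β E C u v,
            (if r = w then
              ((Mdeg E u v : ℝ) * (β * (Mdeg E (Ssel β E u v w) w : ℝ)))⁻¹ else 0) := by
      rw [← Finset.sum_add_distrib]
      exact Finset.sum_congr rfl fun w _ => by simp [mul_add, mul_ite]
    -- Ssel-part pointwise value bound
    have hP2K2 : ∑ w ∈ A2set β E C u v,
        (if r = Ssel β E u v w then
          ((Mdeg E u v : ℝ) * (β * (Mdeg E (Ssel β E u v w) w : ℝ)))⁻¹ else 0) ≤ K2 := by
      have hterm : ∀ w ∈ A2set β E C u v,
          (if r = Ssel β E u v w then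
            ((Mdeg E u v : ℝ) * (β * (Mdeg E (Ssel β E u v w) w : ℝ)))⁻¹ else 0)
          ≤ (if w ∈ phi2p β E C r then
              ((deg E r : ℝ) * (β * (deg E r : ℝ)))⁻¹ else 0) := by
        intro w hw
        by_cases hS : r = Ssel β E u v w
        · obtain ⟨hmem, hnEH, hCS⟩ := Ssel_spec hCuv hw
          have hw2 : w ∈ phi2p β E C r := by
            rw [mem_phi2p]
            refine ⟨?_, ?_, ?_⟩
            · rw [hS]; exact mem_Nbr.1 hmem
            · rw [hS]; exact hnEH
            · rw [hS]; exact hCS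
          rw [if_pos hS, if_pos hw2]
          have hdeq : (deg E r : ℝ) = (deg E (Ssel β E u v w) : ℝ) := by rw [hS]
          have h1 : (deg E r : ℝ) ≤ (Mdeg E u v : ℝ) := by
            rw [hdeq]
            rcases Ssel_eq_or (β := β) (E := E) (u := u) (v := v) (w := w) with h | h
            · rw [h]; exact deg_le_Mdeg_left u v
            · rw [h]; exact deg_le_Mdeg_right u v
          have h2 : (deg E r : ℝ) ≤ (Mdeg E (Ssel β E u v w) w : ℝ) := by
            rw [hdeq]; exact deg_le_Mdeg_left _ _
          apply inv_anti₀ (by positivity)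
          exact mul_le_mul h1 (mul_le_mul_of_nonneg_left h2 hβ0.le)
            (by positivity) (Mdeg_pos hrefl u v).le
        · rw [if_neg hS]
          split
          · positivity
          · exact le_refl 0
      calc _ ≤ ∑ w ∈ A2set β E C u v,
            (if w ∈ phi2p β E C r then
              ((deg E r : ℝ) * (β * (deg E r : ℝ)))⁻¹ else 0) :=
            Finset.sum_le_sum hterm
        _ ≤ ∑ w : V, (if w ∈ phi2p β E C r then
              ((deg E r : ℝ) * (β * (deg E r : ℝ)))⁻¹ else 0) := by
            apply Finset.sum_le_sum_of_subset_of_nonneg (Finset.subset_univ _)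
            intro i _ _
            split
            · positivity
            · exact le_refl 0
        _ = K2 := by
            rw [Finset.sum_ite_mem, Finset.univ_inter, Finset.sum_const, nsmul_eq_mul,
              hK2def]
    -- Ssel-part: vanishes unless r ∈ {u, v}
    have hb2 : ∑ w ∈ A2set β E C u v,
        (if r = Ssel β E u v w then
          ((Mdeg E u v : ℝ) * (β * (Mdeg E (Ssel β E u v w) w : ℝ)))⁻¹ else 0)
        ≤ (if r = u then K2 else 0) + (if r = v then K2 else 0) := by
      by_cases hru : r = u
      · refine hP2K2.trans ?_
        rw [if_pos hru]
        have : (0:ℝ) ≤ (if r = v then K2 else 0) := by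
          split
          · exact hK2
          · exact le_refl 0
        linarith
      · by_cases hrv : r = v
        · refine hP2K2.trans ?_
          rw [if_pos hrv, if_neg hru, zero_add]
        · rw [if_neg hru, if_neg hrv, add_zero]
          apply le_of_eq
          apply Finset.sum_eq_zero
          intro w _
          rw [if_neg]
          intro hS
          rcases Ssel_eq_or (β := β) (E := E) (u := u) (v := v) (w := w) with h | h
          · exact hru (hS.trans h)
          · exact hrv (hS.trans h)
    -- w-part
    have hb3 : ∑ w ∈ A2set β E C u v,
        (if r = w then
          ((Mdeg E u v : ℝ) * (β * (Mdeg E (Ssel β E u v w) w : ℝ)))⁻¹ else 0)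
        ≤ (if u ∈ phi2p β E C r ∧ v ∈ Nbr E r then
            ((deg E u : ℝ) * (β * (Mdeg E u r : ℝ)))⁻¹ else 0)
          + (if v ∈ phi2p β E C r ∧ u ∈ Nbr E r then
            ((deg E v : ℝ) * (β * (Mdeg E v r : ℝ)))⁻¹ else 0) := by
      have hQ1 : (0:ℝ) ≤ (if u ∈ phi2p β E C r ∧ v ∈ Nbr E r then
          ((deg E u : ℝ) * (β * (Mdeg E u r : ℝ)))⁻¹ else 0) := by
        split
        · positivity
        · exact le_refl 0
      have hQ2 : (0:ℝ) ≤ (if v ∈ phi2p β E C r ∧ u ∈ Nbr E r then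
          ((deg E v : ℝ) * (β * (Mdeg E v r : ℝ)))⁻¹ else 0) := by
        split
        · positivity
        · exact le_refl 0
      rw [Finset.sum_ite_eq]
      by_cases hr : r ∈ A2set β E C u v
      · rw [if_pos hr]
        obtain ⟨hmem, hnEH, hCS⟩ := Ssel_spec hCuv hr
        have hrA2 := mem_A2set.1 hr
        rcases Ssel_eq_or (β := β) (E := E) (u := u) (v := v) (w := r) with h | h
        · -- Ssel = u : charge the first component
          have hcond : u ∈ phi2p β E C r ∧ v ∈ Nbr E r := by
            constructor
            · rw [mem_phi2p]
              refine ⟨hsymm u r (by rw [← h]; exact mem_Nbr.1 hmem), ?_, ?_⟩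
              · intro hEH
                exact (h ▸ hnEH) ((EH_symm hsymm).1 hEH)
              · rw [← h]; exact hCS.symm
            · exact (Nbr_mem_symm hsymm).1 hrA2.2.1
          rw [if_pos hcond]
          have hle : ((Mdeg E u v : ℝ) * (β * (Mdeg E (Ssel β E u v r) r : ℝ)))⁻¹
              ≤ ((deg E u : ℝ) * (β * (Mdeg E u r : ℝ)))⁻¹ := by
            rw [h]
            have hd := deg_real_pos hrefl u
            have hm := Mdeg_pos hrefl u r
            apply inv_anti₀ (by positivity)
            exact mul_le_mul_of_nonneg_right (deg_le_Mdeg_left u v) (by positivity)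
          linarith
        · -- Ssel = v : charge the second component
          have hcond : v ∈ phi2p β E C r ∧ u ∈ Nbr E r := by
            constructor
            · rw [mem_phi2p]
              refine ⟨hsymm v r (by rw [← h]; exact mem_Nbr.1 hmem), ?_, ?_⟩
              · intro hEH
                exact (h ▸ hnEH) ((EH_symm hsymm).1 hEH)
              · rw [← h]; exact hCS.symm
            · exact (Nbr_mem_symm hsymm).1 hrA2.1
          rw [if_pos hcond]
          have hle : ((Mdeg E u v : ℝ) * (β * (Mdeg E (Ssel β E u v r) r : ℝ)))⁻¹
              ≤ ((deg E v : ℝ) * (β * (Mdeg E v r : ℝ)))⁻¹ := by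
            rw [h]
            have hd := deg_real_pos hrefl v
            have hm := Mdeg_pos hrefl v r
            apply inv_anti₀ (by positivity)
            exact mul_le_mul_of_nonneg_right (deg_le_Mdeg_right u v) (by positivity)
          linarith
      · rw [if_neg hr]
        linarith
    -- combine
    unfold mfun
    rw [hsplitA2]
    linarith
  -- sum everything
  have hsum : ∑ u ∈ U, ∑ v ∈ phi3p β E C u, mfun β E C u v r ≤
      (∑ u ∈ U, ∑ v ∈ phi3p β E C u,
        ((if r = u then K1 else 0) + (if r = v then K1 else 0)))
      + (∑ u ∈ U, ∑ v ∈ phi3p β E C u,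
        ((if r = u then K2 else 0) + (if r = v then K2 else 0)))
      + ∑ u ∈ U, ∑ v ∈ phi3p β E C u,
        ((if u ∈ phi2p β E C r ∧ v ∈ Nbr E r then
            ((deg E u : ℝ) * (β * (Mdeg E u r : ℝ)))⁻¹ else 0)
         + (if v ∈ phi2p β E C r ∧ u ∈ Nbr E r then
            ((deg E v : ℝ) * (β * (Mdeg E v r : ℝ)))⁻¹ else 0)) := by
    rw [← Finset.sum_add_distrib, ← Finset.sum_add_distrib]
    apply Finset.sum_le_sum
    intro u hu
    rw [← Finset.sum_add_distrib, ← Finset.sum_add_distrib]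
    exact Finset.sum_le_sum (fun v hv => hpt u v hv)
  have t1 := tallyA (β := β) (C := C) hsymm r U hK1
  have t2 := tallyA (β := β) (C := C) hsymm r U hK2
  have t3 := tallyB (β := β) (C := C) hrefl hsymm hβ0 r U
  have hfinal : 2 * ((phi3p β E C r).card : ℝ) * K1
      + 2 * ((phi3p β E C r).card : ℝ) * K2
      + 2 * ((phi2p β E C r).card : ℝ) * (β * (deg E r : ℝ))⁻¹
      = 2 * (((phi2p β E C r).card : ℝ) * ((phi3p β E C r).card : ℝ) /
            (β * (deg E r : ℝ) ^ 2)
          + ((phi2p β E C r).card : ℝ) / (β * (deg E r : ℝ))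
          + ((phi3p β E C r).card : ℝ) / (deg E r : ℝ)) := by
    rw [hK1def, hK2def]
    field_simp
    ring
  linarith

end MassBound
/-- There is a nonnegative coefficient vector `c^+_3` such that
(a) `f^+_3 ≤ Σ_r c^+_3(r)·cost_𝒞(r)`,
(b) `c^+_3(r) ≤ 2·(|φ^+_2(r)|·|φ^+_3(r)|/(β·d(r)²) + |φ^+_2(r)|/(β·d(r)) + |φ^+_3(r)|/d(r))`
for every `r`, and
(c) `Σ_r c^+_3(r) ≤ 2·Σ_{u∈U} (|φ^+_2(u)|·|φ^+_3(u)|/(β·d(u)²) + |φ^+_3(u)|/(β·d(u)) + |φ^+_3(u)|/d(u))`. -/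
theorem exists_coeff_f3p [Fintype V] (E : V → V → Prop)
    (hsymm : ∀ u v, E u v → E v u) (hrefl : ∀ u, E u u)
    (β : ℝ) (hβ0 : 0 < β) (hβ1 : β < 1)
    {α : Type*} (C : V → α)
    (k : ℕ) (hk1 : 1 ≤ k) (hk2 : k ≤ Fintype.card V)
    (U : Finset V) (hU : U.card = k) :
    ∃ c : V → ℝ, (∀ r, 0 ≤ c r) ∧
      (∑ u ∈ U, ∑ v ∈ phi3p β E C u, xval β E u v
        ≤ ∑ r : V, c r * (costC E C r : ℝ)) ∧
      (∀ r : V, c r ≤ 2 *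
        (((phi2p β E C r).card : ℝ) * ((phi3p β E C r).card : ℝ) / (β * (deg E r : ℝ) ^ 2)
          + ((phi2p β E C r).card : ℝ) / (β * (deg E r : ℝ))
          + ((phi3p β E C r).card : ℝ) / (deg E r : ℝ))) ∧
      (∑ r : V, c r ≤ 2 * ∑ u ∈ U,
        (((phi2p β E C u).card : ℝ) * ((phi3p β E C u).card : ℝ) / (β * (deg E u : ℝ) ^ 2)
          + ((phi3p β E C u).card : ℝ) / (β * (deg E u : ℝ))
          + ((phi3p β E C u).card : ℝ) / (deg E u : ℝ))) := by
  refine ⟨fun r => ∑ u ∈ U, ∑ v ∈ phi3p β E C u, mfun β E C u v r, ?_, ?_, ?_, ?_⟩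
  · -- nonnegativity
    intro r
    exact Finset.sum_nonneg fun u _ => Finset.sum_nonneg fun v _ =>
      mfun_nonneg hβ0.le u v r
  · -- (a)
    have hswap : ∑ r : V, (∑ u ∈ U, ∑ v ∈ phi3p β E C u, mfun β E C u v r) *
        (costC E C r : ℝ)
        = ∑ u ∈ U, ∑ v ∈ phi3p β E C u, ∑ r : V, mfun β E C u v r *
            (costC E C r : ℝ) := by
      have h1 : ∀ r : V, (∑ u ∈ U, ∑ v ∈ phi3p β E C u, mfun β E C u v r) *
          (costC E C r : ℝ)
          = ∑ u ∈ U, ∑ v ∈ phi3p β E C u, mfun β E C u v r * (costC E C r : ℝ) := by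
        intro r
        rw [Finset.sum_mul]
        exact Finset.sum_congr rfl fun u _ => Finset.sum_mul _ _ _
      rw [Finset.sum_congr rfl fun r _ => h1 r, Finset.sum_comm]
      exact Finset.sum_congr rfl fun u _ => Finset.sum_comm
    rw [hswap]
    exact Finset.sum_le_sum fun u _ => Finset.sum_le_sum fun v hv =>
      pair_bound hrefl hβ0 hv
  · -- (b)
    intro r
    exact mass_bound hrefl hsymm hβ0 U r
  · -- (c)
    have hswap : ∑ r : V, ∑ u ∈ U, ∑ v ∈ phi3p β E C u, mfun β E C u v r
        = ∑ u ∈ U, ∑ v ∈ phi3p β E C u, ∑ r : V, mfun β E C u v r := by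
      rw [Finset.sum_comm]
      exact Finset.sum_congr rfl fun u _ => Finset.sum_comm
    rw [hswap, Finset.mul_sum]
    refine Finset.sum_le_sum fun u _ => ?_
    have hdu : (0:ℝ) < (deg E u : ℝ) := deg_real_pos hrefl u
    calc ∑ v ∈ phi3p β E C u, ∑ r : V, mfun β E C u v r
        ≤ ∑ _v ∈ phi3p β E C u,
            (2 * (deg E u : ℝ)⁻¹
              + 2 * (((phi2p β E C u).card : ℝ) *
                  ((deg E u : ℝ) * (β * (deg E u : ℝ)))⁻¹)
              + 2 * (β * (deg E u : ℝ))⁻¹) :=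
          Finset.sum_le_sum fun v hv => sum_mfun_total hrefl hsymm hβ0 hv
      _ = ((phi3p β E C u).card : ℝ) *
            (2 * (deg E u : ℝ)⁻¹
              + 2 * (((phi2p β E C u).card : ℝ) *
                  ((deg E u : ℝ) * (β * (deg E u : ℝ)))⁻¹)
              + 2 * (β * (deg E u : ℝ))⁻¹) := by
          rw [Finset.sum_const, nsmul_eq_mul]
      _ = 2 * (((phi2p β E C u).card : ℝ) * ((phi3p β E C u).card : ℝ) /
              (β * (deg E u : ℝ) ^ 2)
            + ((phi3p β E C u).card : ℝ) / (β * (deg E u : ℝ))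
            + ((phi3p β E C u).card : ℝ) / (deg E u : ℝ)) := by
          field_simp
          ring

end
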